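/- arXiv:0710.0326 — 4 statements merged into one kernel-verified Lean document; each statement's English description precedes it below -/
import Mathlib

section
/- For m ≥ 2 and n ≥ 2, the orbit of (0,...,0,1) under the action of SL(m, Z_n) on (Z_n)^m is exactly the set of vectors a with gcd(a, n) = 1, i.e., vectors whose components generate the unit ideal of Z_n. -/
/-!
`ZMod n` has stable range one: if `x` and `y` generate the unit ideal, then `x + k * y` is a unit
where `k` is the product of the primes dividing `n` but not `x`. So a transvection in `SL` moves a
unimodular vector to one whose last coordinate is a unit, and such a vector is the last row of a
diagonal matrix times an identity matrix with that row replaced. Conversely, a row of an invertible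
matrix is unimodular, and a vector over `ZMod n` is unimodular exactly when no divisor `d > 1` of
`n` divides all its entries.
-/

open Matrix Finset

def HasStableRangeOne (R : Type*) [CommRing R] : Prop :=
  ∀ x y : R, IsCoprime x y → ∃ k, IsUnit (x + k * y)

section StableRangeOne

variable {R ι : Type*} [CommRing R] [Fintype ι] [DecidableEq ι]

theorem Matrix.span_range_row_eq_top {A : Matrix ι ι R} (hA : IsUnit A.det) (i : ι) :
    Ideal.span (Set.range (A i)) = ⊤ := by
  rw [Ideal.eq_top_iff_one, Ideal.mem_span_range_iff_exists_fun]
  refine ⟨fun j => A⁻¹ j i, ?_⟩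
  simpa [Matrix.mul_apply, mul_comm] using congr_fun (congr_fun (A.mul_nonsing_inv hA) i) i

theorem Matrix.det_updateRow_one (i : ι) (a : ι → R) : (updateRow 1 i a).det = a i := by
  rw [← det_transpose, ← updateCol_transpose, transpose_one, ← cramer_apply, cramer_one]
  rfl

theorem Matrix.SpecialLinearGroup.exists_row_eq {i j : ι} (hij : i ≠ j) {a : ι → R}
    (ha : IsUnit (a i)) : ∃ A : SpecialLinearGroup ι R, (A : Matrix ι ι R) i = a := by
  let D : Matrix ι ι R := diagonal (Function.update 1 j ↑ha.unit⁻¹)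
  refine ⟨⟨D * updateRow 1 i a, ?_⟩, ?_⟩
  · rw [det_mul, det_updateRow_one, det_diagonal, prod_update_of_mem (mem_univ j)]
    simp
  · ext k
    simp [D, diagonal_mul, hij]

theorem Matrix.SpecialLinearGroup.exists_vecMul_eq_add_smul_single {i : ι} {w : ι → R}
    (hw : w i = 0) :
    ∃ T : SpecialLinearGroup ι R,
      ∀ a, a ᵥ* (T : Matrix ι ι R) = a + (a ⬝ᵥ w) • Pi.single i 1 := by
  refine ⟨⟨1 + vecMulVec w (Pi.single i 1), ?_⟩, fun a => ?_⟩
  · rw [vecMulVec_eq Unit, det_one_add_replicateCol_mul_replicateRow, dotProduct_comm,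
      dotProduct_single, hw, mul_one, add_zero]
  · rw [vecMul_add, vecMul_one, vecMul_vecMulVec]

theorem HasStableRangeOne.exists_isUnit_add_dotProduct (hR : HasStableRangeOne R) {a : ι → R}
    (ha : Ideal.span (Set.range a) = ⊤) (i : ι) :
    ∃ w : ι → R, w i = 0 ∧ IsUnit (a i + a ⬝ᵥ w) := by
  obtain ⟨c, hc⟩ := Ideal.mem_span_range_iff_exists_fun.1 ((Ideal.eq_top_iff_one _).1 ha)
  set v := c - Pi.single i (c i)
  have hv : c i * a i + 1 * (a ⬝ᵥ v) = 1 := by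
    rw [dotProduct_sub, dotProduct_single, dotProduct_comm, dotProduct, hc]
    ring
  obtain ⟨k, hk⟩ := hR _ _ ⟨c i, 1, hv⟩
  exact ⟨k • v, by simp [v], by rwa [dotProduct_smul, smul_eq_mul]⟩

theorem HasStableRangeOne.exists_vecMul_single_eq_iff (hR : HasStableRangeOne R) {i j : ι}
    (hij : i ≠ j) (a : ι → R) :
    (∃ A : Matrix.SpecialLinearGroup ι R, Pi.single i 1 ᵥ* (A : Matrix ι ι R) = a) ↔
      Ideal.span (Set.range a) = ⊤ := by
  constructor
  · rintro ⟨A, rfl⟩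
    have hA : IsUnit (A : Matrix ι ι R).det := by
      rw [Matrix.SpecialLinearGroup.det_coe]
      exact isUnit_one
    rw [single_one_vecMul]
    exact span_range_row_eq_top hA i
  · intro ha
    obtain ⟨w, hwi, hunit⟩ := hR.exists_isUnit_add_dotProduct ha i
    obtain ⟨T, hT⟩ := Matrix.SpecialLinearGroup.exists_vecMul_eq_add_smul_single hwi
    obtain ⟨B, hB⟩ := Matrix.SpecialLinearGroup.exists_row_eq hij (a := a ᵥ* (T : Matrix ι ι R))
      (by simpa [hT] using hunit)
    refine ⟨B * T⁻¹, ?_⟩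
    rw [Matrix.SpecialLinearGroup.coe_mul, ← vecMul_vecMul, single_one_vecMul, row, hB,
      vecMul_vecMul, ← Matrix.SpecialLinearGroup.coe_mul, mul_inv_cancel,
      Matrix.SpecialLinearGroup.coe_one, vecMul_one]

end StableRangeOne

namespace ZMod

variable {n : ℕ} [NeZero n]

theorem castHom_eq_zero_iff_dvd_val {p : ℕ} (h : p ∣ n) (z : ZMod n) :
    castHom h (ZMod p) z = 0 ↔ p ∣ z.val := by
  rw [castHom_apply, cast_eq_val, natCast_eq_zero_iff]

theorem span_range_eq_top_iff {ι : Type*} [Fintype ι] (a : ι → ZMod n) :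
    Ideal.span (Set.range a) = ⊤ ↔ Nat.gcd n (Finset.univ.gcd fun i => (a i).val) = 1 := by
  set d := Nat.gcd n (Finset.univ.gcd fun i => (a i).val)
  constructor
  · intro ha
    have hd : d ∣ n := Nat.gcd_dvd_left _ _
    have hker : Ideal.span (Set.range a) ≤ RingHom.ker (castHom hd (ZMod d)) := by
      rw [Ideal.span_le]
      rintro _ ⟨i, rfl⟩
      exact (castHom_eq_zero_iff_dvd_val hd _).2
        ((Nat.gcd_dvd_right _ _).trans (Finset.gcd_dvd (Finset.mem_univ i)))
    have h1 : (1 : ZMod n) ∈ RingHom.ker (castHom hd (ZMod d)) := hker (ha ▸ Submodule.mem_top)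
    rw [RingHom.mem_ker, map_one] at h1
    exact subsingleton_iff.1 (subsingleton_of_zero_eq_one h1.symm)
  · intro hd
    by_contra hne
    obtain ⟨M, hM, hle⟩ := Ideal.exists_le_maximal _ hne
    have hchar : ∀ k : ℕ, (k : ZMod n) ∈ M → ringChar (ZMod n ⧸ M) ∣ k := fun k hk =>
      ringChar.dvd <| by
        rwa [← map_natCast (Ideal.Quotient.mk M), Ideal.Quotient.eq_zero_iff_mem]
    have hdvd : ringChar (ZMod n ⧸ M) ∣ d := Nat.dvd_gcd (hchar n (by simp))
      (Finset.dvd_gcd fun i _ => hchar _ (by simpa using hle (Ideal.subset_span ⟨i, rfl⟩)))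
    exact CharP.ringChar_ne_one (Nat.dvd_one.1 (hd ▸ hdvd))

theorem isUnit_iff_forall_castHom_ne_zero (z : ZMod n) :
    IsUnit z ↔ ∀ p, p.Prime → ∀ h : p ∣ n, castHom h (ZMod p) z ≠ 0 := by
  simp_rw [Ne, castHom_eq_zero_iff_dvd_val]
  conv_lhs => rw [← natCast_zmod_val z]
  rw [isUnit_iff_coprime]
  exact ⟨fun hz p hp hpn hpz => hp.not_dvd_one (hz ▸ Nat.dvd_gcd hpz hpn),
    fun h => Nat.coprime_of_dvd fun p hp hpz hpn => h p hp hpn hpz⟩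

theorem hasStableRangeOne : HasStableRangeOne (ZMod n) := by
  classical
  intro x y hxy
  refine ⟨∏ p ∈ n.primeFactors with ¬ p ∣ x.val, (p : ZMod n), ?_⟩
  rw [isUnit_iff_forall_castHom_ne_zero]
  intro p hp hpn
  have := Fact.mk hp
  set φ := castHom hpn (ZMod p)
  have hk : φ (∏ q ∈ n.primeFactors with ¬ q ∣ x.val, (q : ZMod n)) = 0 ↔ ¬ p ∣ x.val := by
    rw [map_prod, Finset.prod_eq_zero_iff]
    simp only [Finset.mem_filter, Nat.mem_primeFactors, map_natCast, natCast_eq_zero_iff]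
    constructor
    · rintro ⟨q, ⟨⟨hq, -, -⟩, hqx⟩, hpq⟩
      rwa [(Nat.prime_dvd_prime_iff_eq hp hq).1 hpq]
    · exact fun hpx => ⟨p, ⟨⟨hp, hpn, NeZero.ne n⟩, hpx⟩, dvd_rfl⟩
  rw [map_add, map_mul]
  by_cases hx : p ∣ x.val
  · have hφx : φ x = 0 := (castHom_eq_zero_iff_dvd_val hpn x).2 hx
    have hφy : φ y ≠ 0 := fun hφy => not_isCoprime_zero_zero (hφx ▸ hφy ▸ hxy.map φ)
    rw [hφx, zero_add]
    exact mul_ne_zero (mt hk.1 (not_not.2 hx)) hφy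
  · rw [hk.2 hx, zero_mul, add_zero, Ne, castHom_eq_zero_iff_dvd_val]
    exact hx

end ZMod

/-- For m ≥ 2, n ≥ 2, the orbit of (0,…,0,1) under SL(m, Z_n) is exactly the
set of vectors a with gcd(a, n) = 1. -/
theorem orbit_one_eq_coprime (m n : ℕ) (hn : 2 ≤ n) (hm : 2 ≤ m) :
    {a : Fin m → ZMod n |
      ∃ A : Matrix.SpecialLinearGroup (Fin m) (ZMod n),
        vecMul (Pi.single (⟨m - 1, by omega⟩ : Fin m) (1 : ZMod n))
          (A : Matrix (Fin m) (Fin m) (ZMod n)) = a}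
    = {a : Fin m → ZMod n |
        Nat.gcd n (Finset.univ.gcd fun i => (a i).val) = 1} := by
  have : NeZero n := ⟨by omega⟩
  ext a
  rw [Set.mem_ofPred_eq, Set.mem_ofPred_eq, ← ZMod.span_range_eq_top_iff]
  exact ZMod.hasStableRangeOne.exists_vecMul_single_eq_iff (j := ⟨0, by omega⟩)
    (by rw [Ne, Fin.mk.injEq]; omega) a
end

section
/- For p prime, k ≥ 1, m ≥ 2, and 0 ≤ j ≤ k, the set {a ∈ (Z_{p^k})^m : gcd(a, p^k) = p^j} is exactly one orbit of the SL(m, Z_{p^k})-action, namely the orbit of (0,...,0,p^j). -/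
open Matrix Finset

/-!
An element `a` of `(ℤ/p^k)^m` has `gcd(a, p^k) = p^j` exactly when `a = p^j • b` for a vector `b`
with a unit entry. Since `ℤ/p^k` is local, every row of an `SL` matrix has a unit entry, and
conversely any vector with a unit entry is the last row of an `SL` matrix: rank-one
transvections `1 + x (w - v)ᵀ` carry `v` to `w` whenever `v ⬝ x = w ⬝ x = 1`.
-/

theorem Nat.gcd_prime_pow_eq_pow_iff {p k j G : ℕ} (hp : p.Prime) (hj : j ≤ k) :
    Nat.gcd (p ^ k) G = p ^ j ↔ p ^ j ∣ G ∧ (j < k → ¬ p ^ (j + 1) ∣ G) := by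
  constructor
  · intro h
    refine ⟨h ▸ Nat.gcd_dvd_right _ _, fun hjk hG => ?_⟩
    have hdvd : p ^ (j + 1) ∣ p ^ j := h ▸ Nat.dvd_gcd (pow_dvd_pow p hjk) hG
    have := (Nat.pow_dvd_pow_iff_le_right hp.one_lt).mp hdvd
    omega
  · rintro ⟨hG, hmax⟩
    obtain ⟨s, hsk, hs⟩ := (Nat.dvd_prime_pow hp).mp (Nat.gcd_dvd_left (p ^ k) G)
    have hjs : j ≤ s :=
      (Nat.pow_dvd_pow_iff_le_right hp.one_lt).mp (hs ▸ Nat.dvd_gcd (pow_dvd_pow p hj) hG)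
    rcases hjs.eq_or_lt with rfl | hjs
    · exact hs
    · exact absurd ((pow_dvd_pow p hjs).trans (hs ▸ Nat.gcd_dvd_right _ _)) (hmax (by omega))

namespace ZMod

theorem natCast_dvd_iff_dvd_val {n d : ℕ} [NeZero n] (hd : d ∣ n) (x : ZMod n) :
    (d : ZMod n) ∣ x ↔ d ∣ x.val := by
  constructor
  · rintro ⟨y, rfl⟩
    rw [val_mul, val_natCast, Nat.dvd_mod_iff hd]
    exact ((Nat.dvd_mod_iff hd).2 dvd_rfl).mul_right _
  · rintro ⟨c, hc⟩
    exact ⟨c, by rw [← natCast_zmod_val x, hc, Nat.cast_mul]⟩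

theorem isUnit_iff_not_dvd_val {p k : ℕ} (hp : p.Prime) (hk : 0 < k) (x : ZMod (p ^ k)) :
    IsUnit x ↔ ¬ p ∣ x.val := by
  have : NeZero (p ^ k) := ⟨pow_ne_zero k hp.ne_zero⟩
  rw [← isUnit_natCast_iff_not_dvd_pow hp hk, natCast_zmod_val]

theorem isLocalRing_prime_pow {p k : ℕ} (hp : p.Prime) (hk : 0 < k) :
    IsLocalRing (ZMod (p ^ k)) := by
  have : Fact (1 < p ^ k) := ⟨Nat.one_lt_pow hk.ne' hp.one_lt⟩
  refine IsLocalRing.of_nonunits_add fun x y hx hy => ?_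
  simp only [mem_nonunits_iff, isUnit_iff_not_dvd_val hp hk, not_not] at hx hy ⊢
  rw [val_add, Nat.dvd_mod_iff (dvd_pow_self p hk.ne')]
  exact dvd_add hx hy

theorem pow_succ_dvd_val_pow_mul_iff {p k j : ℕ} (hp : p.Prime) (hjk : j < k) (y : ZMod (p ^ k)) :
    p ^ (j + 1) ∣ ((p : ZMod (p ^ k)) ^ j * y).val ↔ ¬ IsUnit y := by
  have : NeZero (p ^ k) := ⟨pow_ne_zero k hp.ne_zero⟩
  rw [← Nat.cast_pow, val_mul, val_natCast,
    Nat.mod_eq_of_lt (Nat.pow_lt_pow_right hp.one_lt hjk),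
    Nat.dvd_mod_iff (pow_dvd_pow p hjk), pow_succ,
    Nat.mul_dvd_mul_iff_left (pow_pos hp.pos j), isUnit_iff_not_dvd_val hp (by omega), not_not]

theorem gcd_val_eq_prime_pow_iff {ι : Type*} [Fintype ι] [Nonempty ι] {p k j : ℕ}
    (hp : p.Prime) (hj : j ≤ k) (a : ι → ZMod (p ^ k)) :
    Nat.gcd (p ^ k) (univ.gcd fun i => (a i).val) = p ^ j ↔
      ∃ b : ι → ZMod (p ^ k), (∃ i, IsUnit (b i)) ∧ (p : ZMod (p ^ k)) ^ j • b = a := by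
  have : NeZero (p ^ k) := ⟨pow_ne_zero k hp.ne_zero⟩
  have hdvd (x : ZMod (p ^ k)) : (p : ZMod (p ^ k)) ^ j ∣ x ↔ p ^ j ∣ x.val := by
    rw [← Nat.cast_pow, natCast_dvd_iff_dvd_val (pow_dvd_pow p hj)]
  rw [Nat.gcd_prime_pow_eq_pow_iff hp hj, Finset.dvd_gcd_iff]
  constructor
  · rintro ⟨hpj, hmax⟩
    choose b hb using fun i => (hdvd (a i)).2 (hpj i (mem_univ i))
    rcases hj.lt_or_eq with hjk | rfl
    · obtain ⟨i, hi⟩ : ∃ i, ¬ p ^ (j + 1) ∣ (a i).val := by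
        by_contra! h
        exact hmax hjk (Finset.dvd_gcd fun i _ => h i)
      rw [hb i, pow_succ_dvd_val_pow_mul_iff hp hjk, not_not] at hi
      exact ⟨b, ⟨i, hi⟩, funext fun i => (hb i).symm⟩
    · refine ⟨1, ⟨Classical.arbitrary ι, isUnit_one⟩, funext fun i => ?_⟩
      rw [hb i, ← Nat.cast_pow, natCast_self, zero_smul, zero_mul, Pi.zero_apply]
  · rintro ⟨b, ⟨i, hi⟩, rfl⟩
    refine ⟨fun i _ => (hdvd _).1 ⟨b i, rfl⟩, fun hjk hG => ?_⟩
    exact (pow_succ_dvd_val_pow_mul_iff hp hjk (b i)).1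
      (hG.trans (Finset.gcd_dvd (mem_univ i))) hi

end ZMod

theorem Matrix.exists_isUnit_apply_of_isUnit_det {n R : Type*} [Fintype n] [DecidableEq n]
    [CommRing R] [IsLocalRing R] {A : Matrix n n R} (hA : IsUnit A.det) (r : n) :
    ∃ i, IsUnit (A r i) := by
  by_contra! h
  have : A.det ∈ IsLocalRing.maximalIdeal R := by
    rw [det_eq_sum_mul_adjugate_row A r]
    exact Ideal.sum_mem _ fun i _ => Ideal.mul_mem_right _ _ (h i)
  exact this hA

namespace Matrix.SpecialLinearGroup

variable {n R : Type*} [Fintype n] [DecidableEq n] [CommRing R]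

theorem exists_vecMul_eq_of_dotProduct_eq_one {v w x : n → R} (hv : v ⬝ᵥ x = 1)
    (hw : w ⬝ᵥ x = 1) : ∃ A : SpecialLinearGroup n R, v ᵥ* (A : Matrix n n R) = w := by
  have hdet : (1 + vecMulVec x (w - v)).det = 1 := by
    rw [vecMulVec_eq Unit, det_one_add_replicateCol_mul_replicateRow, sub_dotProduct, hv, hw]
    ring
  refine ⟨⟨1 + vecMulVec x (w - v), hdet⟩, ?_⟩
  simp only [vecMul_add, vecMul_one, vecMul_vecMulVec, hv, one_smul, add_sub_cancel]

theorem exists_single_one_vecMul_eq {r i : n} (hir : i ≠ r) {b : n → R} (hb : IsUnit (b i)) :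
    ∃ A : SpecialLinearGroup n R, Pi.single r 1 ᵥ* (A : Matrix n n R) = b := by
  apply exists_vecMul_eq_of_dotProduct_eq_one
    (x := Pi.single r 1 + Pi.single i (↑hb.unit⁻¹ * (1 - b r)))
  · simp [hir]
  · rw [dotProduct_add, dotProduct_single, dotProduct_single, ← mul_assoc, hb.mul_val_inv]
    ring

theorem exists_row_eq_s14 [Nontrivial n] (r : n) {b : n → R} {i : n} (hb : IsUnit (b i)) :
    ∃ A : SpecialLinearGroup n R, (A : Matrix n n R).row r = b := by
  simp only [← single_one_vecMul]
  by_cases hir : i = r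
  · subst hir
    obtain ⟨z, hz⟩ := exists_ne i
    obtain ⟨A, hA⟩ := exists_single_one_vecMul_eq (R := R) hz (b := Pi.single z 1) (by simp)
    obtain ⟨B, hB⟩ := exists_single_one_vecMul_eq hz.symm hb
    exact ⟨A * B, by rw [coe_mul, ← vecMul_vecMul, hA, hB]⟩
  · exact exists_single_one_vecMul_eq hir hb

end Matrix.SpecialLinearGroup

/-- For p prime, k ≥ 1, m ≥ 2, 0 ≤ j ≤ k, the set of a ∈ (Z_{p^k})^m with
gcd(a, p^k) = p^j is exactly the SL(m, Z_{p^k})-orbit of (0,…,0,p^j). -/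
theorem orbit_prime_power (m p k j : ℕ) (hp : p.Prime) (hk : 1 ≤ k)
    (hm : 2 ≤ m) (hj : j ≤ k) :
    {a : Fin m → ZMod (p ^ k) |
        Nat.gcd (p ^ k) (Finset.univ.gcd fun i => (a i).val) = p ^ j}
      = {a : Fin m → ZMod (p ^ k) |
          ∃ A : Matrix.SpecialLinearGroup (Fin m) (ZMod (p ^ k)),
            vecMul (Pi.single (⟨m - 1, by omega⟩ : Fin m)
                ((p : ZMod (p ^ k)) ^ j))
              (A : Matrix (Fin m) (Fin m) (ZMod (p ^ k))) = a} := by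
  have := ZMod.isLocalRing_prime_pow hp hk
  have : Nontrivial (Fin m) := Fin.nontrivial_iff_two_le.mpr hm
  ext a
  simp only [Set.mem_ofPred_eq, ZMod.gcd_val_eq_prime_pow_iff hp hj, single_vecMul]
  constructor
  · rintro ⟨b, ⟨i, hi⟩, rfl⟩
    obtain ⟨A, hA⟩ := SpecialLinearGroup.exists_row_eq_s14 ⟨m - 1, by omega⟩ hi
    exact ⟨A, by rw [hA]⟩
  · rintro ⟨A, rfl⟩
    have hA : IsUnit (A : Matrix (Fin m) (Fin m) (ZMod (p ^ k))).det := by simp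
    exact ⟨_, exists_isUnit_apply_of_isUnit_det hA _, rfl⟩
end

section
/- For p prime, k ≥ 1, m ≥ 2, the SL(m, Z_{p^k})-action on (Z_{p^k})^m has exactly k+1 orbits. -/
open Matrix

/-
A vector with a unit entry lies in the orbit of a standard basis vector: a transvection makes
another entry equal to `1`, and a vector whose `i`-th entry is `1` is the `i`-th row of the
determinant-one matrix obtained from the identity by replacing that row. Every non-unit of
`ZMod (p ^ k)` is a multiple of `p`, so peeling off factors of `p` writes any nonzero vector as
`p ^ j` (`j < k`) times a vector with a unit entry. Hence every orbit contains some `p ^ j • e`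
with `j ≤ k`. These orbits are distinct because the ideal generated by the entries of a vector is
an orbit invariant, and the ideals `(p ^ j)` for `j ≤ k` are distinct.
-/

section

variable {R : Type*} [CommRing R]

lemma pow_eq_zero_of_pow_dvd_pow {π : R} (hπ : IsNilpotent π) {i j : ℕ} (hij : i < j)
    (h : π ^ j ∣ π ^ i) : π ^ i = 0 := by
  obtain ⟨y, hy⟩ := h
  have hunit : IsUnit (1 - π ^ (j - i) * y) :=
    (Commute.all _ _).isNilpotent_mul_right (hπ.pow_of_pos (by omega)) |>.isUnit_one_sub
  have : π ^ i * (1 - π ^ (j - i) * y) = 0 := by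
    rw [mul_sub, mul_one, ← mul_assoc, ← pow_add, Nat.add_sub_cancel' hij.le, ← hy, sub_self]
  exact hunit.mul_left_eq_zero.1 this

lemma eq_of_span_singleton_pow_eq {π : R} {k i j : ℕ} (hk : π ^ k = 0)
    (hne : ∀ i < k, π ^ i ≠ 0) (hi : i ≤ k) (hj : j ≤ k)
    (h : Ideal.span {π ^ i} = Ideal.span {π ^ j}) : i = j := by
  have hπ : IsNilpotent π := ⟨k, hk⟩
  rcases lt_trichotomy i j with hij | rfl | hji
  · exact absurd (pow_eq_zero_of_pow_dvd_pow hπ hij (Ideal.span_singleton_le_span_singleton.1 h.le))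
      (hne i (hij.trans_le hj))
  · rfl
  · exact absurd (pow_eq_zero_of_pow_dvd_pow hπ hji (Ideal.span_singleton_le_span_singleton.1 h.ge))
      (hne j (hji.trans_le hi))

variable {n : Type*}

lemma Ideal.span_range_single [DecidableEq n] (i : n) (x : R) :
    Ideal.span (Set.range (Pi.single i x)) = Ideal.span {x} := by
  refine le_antisymm (Ideal.span_le.2 ?_) ((Ideal.span_singleton_le_iff_mem _).2 ?_)
  · rintro _ ⟨l, rfl⟩
    rcases eq_or_ne l i with rfl | hl
    · simp
    · simp [hl]
  · exact Ideal.subset_span ⟨i, by simp⟩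

lemma exists_eq_pow_smul {π : R} (hπ : ∀ x : R, ¬IsUnit x → π ∣ x) (N : ℕ) (a : n → R) :
    (∃ c, a = π ^ N • c) ∨ ∃ j < N, ∃ c i, IsUnit (c i) ∧ a = π ^ j • c := by
  induction N with
  | zero => exact .inl ⟨a, by rw [pow_zero, one_smul]⟩
  | succ N ih =>
    rcases ih with ⟨c, rfl⟩ | ⟨j, hj, c, i, hc, rfl⟩
    · by_cases hunit : ∃ i, IsUnit (c i)
      · obtain ⟨i, hi⟩ := hunit
        exact .inr ⟨N, N.lt_succ_self, c, i, hi, rfl⟩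
      · simp only [not_exists] at hunit
        choose d hd using fun i => hπ _ (hunit i)
        refine .inl ⟨d, ?_⟩
        rw [pow_succ, mul_smul, show c = π • d from funext hd]
    · exact .inr ⟨j, hj.trans N.lt_succ_self, c, i, hc, rfl⟩

end

namespace Matrix

variable {n R : Type*} [Fintype n] [CommRing R]

lemma span_range_vecMul_le (a : n → R) (A : Matrix n n R) :
    Ideal.span (Set.range (a ᵥ* A)) ≤ Ideal.span (Set.range a) := by
  refine Ideal.span_le.2 ?_
  rintro _ ⟨j, rfl⟩
  exact Ideal.sum_mem _ fun i _ => Ideal.mul_mem_right _ _ (Ideal.subset_span ⟨i, rfl⟩)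

variable [DecidableEq n]

lemma vecMul_transvection (c : n → R) (i j : n) (t : R) :
    c ᵥ* transvection i j t = c + Pi.single j (c i * t) := by
  rw [transvection, vecMul_add, vecMul_one]
  ext l
  simp [vecMul, dotProduct, Matrix.single_apply, Pi.single_apply, ite_and, eq_comm]

lemma det_one_updateRow (i : n) (c : n → R) : ((1 : Matrix n n R).updateRow i c).det = c i := by
  have hc : ∑ k, c k • (1 : Matrix n n R) k = c := by
    ext l
    simp [Matrix.one_apply]
  simpa [hc] using det_updateRow_sum (1 : Matrix n n R) i c

variable (n R) in
def SameSLOrbit (a b : n → R) : Prop :=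
  ∃ A : SpecialLinearGroup n R, a ᵥ* (A : Matrix n n R) = b

namespace SameSLOrbit

lemma refl (a : n → R) : SameSLOrbit n R a a := ⟨1, vecMul_one a⟩

lemma symm {a b : n → R} (h : SameSLOrbit n R a b) : SameSLOrbit n R b a := by
  obtain ⟨A, rfl⟩ := h
  exact ⟨A⁻¹, by rw [vecMul_vecMul, ← SpecialLinearGroup.coe_mul, mul_inv_cancel,
    SpecialLinearGroup.coe_one, vecMul_one]⟩

lemma trans {a b c : n → R} (hab : SameSLOrbit n R a b) (hbc : SameSLOrbit n R b c) :
    SameSLOrbit n R a c := by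
  obtain ⟨A, rfl⟩ := hab
  obtain ⟨B, rfl⟩ := hbc
  exact ⟨A * B, by rw [SpecialLinearGroup.coe_mul, vecMul_vecMul]⟩

lemma smul {a b : n → R} (h : SameSLOrbit n R a b) (r : R) : SameSLOrbit n R (r • a) (r • b) := by
  obtain ⟨A, rfl⟩ := h
  exact ⟨A, by rw [smul_vecMul]⟩

lemma span_range_le {a b : n → R} (h : SameSLOrbit n R a b) :
    Ideal.span (Set.range b) ≤ Ideal.span (Set.range a) := by
  obtain ⟨A, rfl⟩ := h
  exact span_range_vecMul_le a A

lemma span_range_eq {a b : n → R} (h : SameSLOrbit n R a b) :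
    Ideal.span (Set.range a) = Ideal.span (Set.range b) :=
  le_antisymm h.symm.span_range_le h.span_range_le

lemma update_of_isUnit {c : n → R} {i j : n} (hc : IsUnit (c i)) (hij : j ≠ i) (x : R) :
    SameSLOrbit n R c (Function.update c j x) := by
  refine ⟨⟨transvection i j (hc.unit⁻¹ * (x - c j)), det_transvection_of_ne i j hij.symm _⟩, ?_⟩
  rw [SpecialLinearGroup.coe_mk, vecMul_transvection, ← mul_assoc, IsUnit.mul_val_inv, one_mul]
  ext l
  rcases eq_or_ne l j with rfl | hl
  · simp
  · simp [hl]

lemma single_one_of_apply_eq_one {c : n → R} {i : n} (hc : c i = 1) :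
    SameSLOrbit n R (Pi.single i 1) c :=
  ⟨⟨_, (det_one_updateRow i c).trans hc⟩, by
    rw [SpecialLinearGroup.coe_mk, single_one_vecMul]; exact updateRow_self⟩

lemma single_one_of_isUnit_of_ne {c : n → R} {i j : n} (hc : IsUnit (c i)) (hij : j ≠ i) :
    SameSLOrbit n R c (Pi.single j 1) :=
  (update_of_isUnit hc hij 1).trans (single_one_of_apply_eq_one (Function.update_self j 1 c)).symm

lemma single_one_of_isUnit [Nontrivial n] {c : n → R} {i : n} (hc : IsUnit (c i)) (i₀ : n) :
    SameSLOrbit n R c (Pi.single i₀ 1) := by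
  rcases ne_or_eq i₀ i with hi | rfl
  · exact single_one_of_isUnit_of_ne hc hi
  · obtain ⟨j, hj⟩ := exists_ne i₀
    refine (single_one_of_isUnit_of_ne hc hj).trans (single_one_of_isUnit_of_ne ?_ hj.symm)
    simp

lemma exists_single_pow [Nontrivial n] {π : R} (hπ : ∀ x : R, ¬IsUnit x → π ∣ x)
    {k : ℕ} (hk : π ^ k = 0) (a : n → R) (i₀ : n) :
    ∃ j ≤ k, SameSLOrbit n R a (Pi.single i₀ (π ^ j)) := by
  rcases exists_eq_pow_smul hπ k a with ⟨c, rfl⟩ | ⟨j, hj, c, i, hc, rfl⟩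
  · exact ⟨k, le_rfl, by simpa [hk] using SameSLOrbit.refl 0⟩
  · refine ⟨j, hj.le, ?_⟩
    simpa [← Pi.single_smul] using (SameSLOrbit.single_one_of_isUnit hc i₀).smul (π ^ j)

end SameSLOrbit

theorem card_quot_sameSLOrbit [Nontrivial n] {π : R} (hπ : ∀ x : R, ¬IsUnit x → π ∣ x) {k : ℕ}
    (hk : π ^ k = 0) (hne : ∀ i < k, π ^ i ≠ 0) :
    Nat.card (Quot (SameSLOrbit n R)) = k + 1 := by
  obtain ⟨i₀⟩ := (inferInstance : Nonempty n)
  let orbitOf (j : Fin (k + 1)) : Quot (SameSLOrbit n R) := Quot.mk _ (Pi.single i₀ (π ^ (j : ℕ)))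
  have hinj : orbitOf.Injective := by
    intro i j hij
    have hspan := congrArg (Quot.lift (fun a => Ideal.span (Set.range a))
      fun _ _ h => h.span_range_eq) hij
    simp only [orbitOf, Ideal.span_range_single] at hspan
    exact Fin.ext (eq_of_span_singleton_pow_eq hk hne i.is_le j.is_le hspan)
  have hsurj : orbitOf.Surjective := by
    rintro ⟨a⟩
    obtain ⟨j, hj, ha⟩ := SameSLOrbit.exists_single_pow hπ hk a i₀
    exact ⟨⟨j, Nat.lt_succ_of_le hj⟩, (Quot.sound ha).symm⟩
  rw [← Nat.card_congr (Equiv.ofBijective orbitOf ⟨hinj, hsurj⟩), Nat.card_fin]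

end Matrix

lemma ZMod.natCast_dvd_of_not_isUnit {p : ℕ} (hp : p.Prime) (k : ℕ) {x : ZMod (p ^ k)}
    (hx : ¬IsUnit x) : (p : ZMod (p ^ k)) ∣ x := by
  have : NeZero (p ^ k) := ⟨pow_ne_zero k hp.ne_zero⟩
  rw [← ZMod.natCast_zmod_val x, ZMod.isUnit_iff_coprime] at hx
  have hdvd : p ∣ x.val := by
    by_contra h
    exact hx ((Nat.coprime_comm.1 (hp.coprime_iff_not_dvd.2 h)).pow_right k)
  rw [← ZMod.natCast_zmod_val x]
  exact Nat.cast_dvd_cast hdvd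

lemma ZMod.natCast_pow_eq_zero_iff {p : ℕ} (hp : 1 < p) (k i : ℕ) :
    (p : ZMod (p ^ k)) ^ i = 0 ↔ k ≤ i := by
  rw [← Nat.cast_pow, ZMod.natCast_eq_zero_iff, Nat.pow_dvd_pow_iff_le_right hp]

theorem num_orbits_prime_power_general (m p k : ℕ) (hp : p.Prime)
    (hm : 2 ≤ m) :
    Nat.card (Quot (fun a b : Fin m → ZMod (p ^ k) =>
        ∃ A : Matrix.SpecialLinearGroup (Fin m) (ZMod (p ^ k)),
          vecMul a (A : Matrix (Fin m) (Fin m) (ZMod (p ^ k))) = b))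
      = k + 1 := by
  have : Nontrivial (Fin m) := Fin.nontrivial_iff_two_le.2 hm
  exact card_quot_sameSLOrbit (fun _ => ZMod.natCast_dvd_of_not_isUnit hp k)
    ((ZMod.natCast_pow_eq_zero_iff hp.one_lt k k).2 le_rfl)
    fun i hi => mt (ZMod.natCast_pow_eq_zero_iff hp.one_lt k i).1 (by omega)

/-- For p prime, k ≥ 1, m ≥ 2, the SL(m, Z_{p^k})-action on (Z_{p^k})^m has
exactly k + 1 orbits. -/
theorem num_orbits_prime_power (m p k : ℕ) (hp : p.Prime) (hk : 1 ≤ k)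
    (hm : 2 ≤ m) :
    Nat.card (Quot (fun a b : Fin m → ZMod (p ^ k) =>
        ∃ A : Matrix.SpecialLinearGroup (Fin m) (ZMod (p ^ k)),
          vecMul a (A : Matrix (Fin m) (Fin m) (ZMod (p ^ k))) = b))
      = k + 1 :=
  num_orbits_prime_power_general m p k hp hm
end

section
/- For m ≥ 2 and any n ≥ 2, the orbits of the SL(m, Z_n)-action on (Z_n)^m are exactly the sets O_d = {a ∈ (Z_n)^m : gcd(a, n) = d} for divisors d of n; in particular (Z_n)^m is the disjoint union over d | n of O_d. -/
open Matrix Finset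

/-!
The gcd `gcd(a, n)` is an orbit invariant: for `d ∣ n`, `d ∣ gcd(a, n)` says that `a` vanishes
modulo `d`, which is preserved by any matrix. Conversely, transvections run the Euclidean
algorithm on the representatives in `[0, n)` of two coordinates, so every vector can be moved
onto a multiple `x • eᵢ` of a basis vector, and a Bézout step with the modulus `n` replaces `x`
by `gcd(n, x)`. Hence each orbit contains the vector `gcd(a, n) • eᵢ`.
-/

namespace ZMod

variable {n : ℕ} [NeZero n]

theorem val_sub_natCast_div_mul (x y : ZMod n) :
    (x - ((x.val / y.val : ℕ) : ZMod n) * y).val = x.val % y.val := by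
  have hx : x = ((x.val % y.val : ℕ) : ZMod n) + ((x.val / y.val : ℕ) : ZMod n) * y := by
    conv_lhs => rw [← natCast_zmod_val x, ← Nat.mod_add_div x.val y.val]
    rw [Nat.cast_add, Nat.cast_mul, natCast_zmod_val, mul_comm]
  rw [sub_eq_of_eq_add hx, val_cast_of_lt ((Nat.mod_le _ _).trans_lt (val_lt x))]

theorem dvd_val_iff_castHom_eq_zero {d : ℕ} (hd : d ∣ n) (x : ZMod n) :
    d ∣ x.val ↔ castHom hd (ZMod d) x = 0 := by
  rw [castHom_apply, ← natCast_val, natCast_eq_zero_iff]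

end ZMod

namespace SLOrbit

section CommRing

variable {ι R : Type*} [Fintype ι] [DecidableEq ι] [CommRing R]

def SLRel (a b : ι → R) : Prop :=
  ∃ A : Matrix.SpecialLinearGroup ι R, a ᵥ* (A : Matrix ι ι R) = b

namespace SLRel

theorem refl (a : ι → R) : SLRel a a :=
  ⟨1, vecMul_one a⟩

theorem symm {a b : ι → R} (h : SLRel a b) : SLRel b a := by
  obtain ⟨A, rfl⟩ := h
  refine ⟨A⁻¹, ?_⟩
  rw [vecMul_vecMul, ← Matrix.SpecialLinearGroup.coe_mul, mul_inv_cancel,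
    Matrix.SpecialLinearGroup.coe_one, vecMul_one]

theorem trans {a b c : ι → R} (hab : SLRel a b) (hbc : SLRel b c) : SLRel a c := by
  obtain ⟨A, rfl⟩ := hab
  obtain ⟨B, rfl⟩ := hbc
  exact ⟨A * B, by rw [Matrix.SpecialLinearGroup.coe_mul, vecMul_vecMul]⟩

theorem update_add_mul {i j : ι} (hij : i ≠ j) (c : R) (a : ι → R) :
    SLRel a (Function.update a j (a j + c * a i)) := by
  refine ⟨Matrix.SpecialLinearGroup.transvection hij c, funext fun k => ?_⟩
  rw [Matrix.SpecialLinearGroup.transvection_coe, vecMul_add, vecMul_one]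
  rcases eq_or_ne k j with rfl | hk
  · simp [vecMul, dotProduct, single, mul_comm]
  · simp [vecMul, dotProduct, single, hk, hk.symm]

theorem swap_of_eq_zero {i j : ι} (hij : i ≠ j) {a : ι → R} (hi : a i = 0) :
    SLRel a (Function.update (Function.update a i (a j)) j 0) := by
  have h := (update_add_mul hij.symm 1 a).trans (update_add_mul hij (-1) _)
  convert h using 2 <;> simp [hi, hij.symm]

end SLRel

end CommRing

variable {ι : Type*} [Fintype ι] {n : ℕ}

def gcdWith (n : ℕ) (a : ι → ZMod n) : ℕ :=
  n.gcd (univ.gcd fun i => (a i).val)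

theorem dvd_gcdWith_iff {d : ℕ} {a : ι → ZMod n} :
    d ∣ gcdWith n a ↔ d ∣ n ∧ ∀ i, d ∣ (a i).val := by
  simp [gcdWith, Nat.dvd_gcd_iff, Finset.dvd_gcd_iff]

theorem gcdWith_dvd_gcdWith_vecMul [NeZero n] (a : ι → ZMod n) (A : Matrix ι ι (ZMod n)) :
    gcdWith n a ∣ gcdWith n (a ᵥ* A) := by
  obtain ⟨hn, ha⟩ := dvd_gcdWith_iff.mp (dvd_refl (gcdWith n a))
  simp only [ZMod.dvd_val_iff_castHom_eq_zero hn] at ha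
  refine dvd_gcdWith_iff.mpr ⟨hn, fun j => ?_⟩
  rw [ZMod.dvd_val_iff_castHom_eq_zero hn, RingHom.map_vecMul, show _ ∘ a = 0 from funext ha,
    zero_vecMul, Pi.zero_apply]

theorem gcdWith_single [DecidableEq ι] (i : ι) (x : ZMod n) :
    gcdWith n (Pi.single i x) = n.gcd x.val := by
  refine Nat.dvd_antisymm ?_ ?_
  · obtain ⟨hn, hx⟩ := (dvd_gcdWith_iff (a := Pi.single i x)).mp dvd_rfl
    exact Nat.dvd_gcd hn (by simpa using hx i)
  · refine dvd_gcdWith_iff.mpr ⟨Nat.gcd_dvd_left _ _, fun k => ?_⟩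
    rcases eq_or_ne k i with rfl | hk
    · simpa using Nat.gcd_dvd_right _ _
    · simp [hk]

variable [DecidableEq ι]

theorem SLRel.gcdWith_eq [NeZero n] {a b : ι → ZMod n} (h : SLRel a b) :
    gcdWith n a = gcdWith n b := by
  have hdvd {a b : ι → ZMod n} : SLRel a b → gcdWith n a ∣ gcdWith n b := by
    rintro ⟨A, rfl⟩
    exact gcdWith_dvd_gcdWith_vecMul a A
  exact Nat.dvd_antisymm (hdvd h) (hdvd h.symm)

/-- Reduce `a i` modulo `a j`, recurse with the roles of `i` and `j` exchanged, and swap back. -/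
theorem exists_slRel_apply_eq_zero [NeZero n] {i j : ι} (hij : i ≠ j) (a : ι → ZMod n) :
    ∃ b, SLRel a b ∧ b j = 0 ∧ ∀ k, k ≠ i → k ≠ j → b k = a k := by
  induction hN : (a j).val using Nat.strong_induction_on generalizing i j a with
  | _ N ih =>
    by_cases h0 : a j = 0
    · exact ⟨a, .refl a, h0, fun _ _ _ => rfl⟩
    set q : ZMod n := (((a i).val / (a j).val : ℕ) : ZMod n)
    have hlt : (a i - q * a j).val < N := by
      rw [ZMod.val_sub_natCast_div_mul, ← hN]
      exact Nat.mod_lt _ (ZMod.val_pos.mpr h0)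
    obtain ⟨b, hab, hbi, hb⟩ :=
      ih _ hlt hij.symm (Function.update a i (a i + -q * a j)) (by simp [neg_mul, sub_eq_add_neg])
    refine ⟨_, (SLRel.update_add_mul hij.symm (-q) a).trans (hab.trans
      (SLRel.swap_of_eq_zero hij hbi)), by simp, fun k hki hkj => ?_⟩
    simp [hki, hkj, hb k hkj hki]

theorem exists_slRel_single [NeZero n] (i : ι) (a : ι → ZMod n) :
    ∃ x, SLRel a (Pi.single i x) := by
  have key (s : Finset ι) (hi : i ∉ s) : ∃ b, SLRel a b ∧ ∀ k ∈ s, b k = 0 := by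
    induction s using Finset.induction_on with
    | empty => exact ⟨a, .refl a, by simp⟩
    | insert j s hj ih =>
      obtain ⟨b, hab, hb⟩ := ih (fun h => hi (mem_insert_of_mem h))
      have hij : i ≠ j := fun h => hi (h ▸ mem_insert_self i s)
      obtain ⟨c, hbc, hcj, hc⟩ := exists_slRel_apply_eq_zero hij b
      refine ⟨c, hab.trans hbc, ?_⟩
      simp only [mem_insert, forall_eq_or_imp]
      exact ⟨hcj, fun k hk => (hc k (fun h => hi (h ▸ mem_insert_of_mem hk))
        (fun h => hj (h ▸ hk))).trans (hb k hk)⟩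
  obtain ⟨b, hab, hb⟩ := key (univ.erase i) (notMem_erase i univ)
  refine ⟨b i, ?_⟩
  convert hab using 1
  funext k
  rcases eq_or_ne k i with rfl | hk
  · simp
  · simp [hk, hb k (mem_erase.mpr ⟨hk, mem_univ k⟩)]

theorem slRel_single_natCast_gcd [NeZero n] {i j : ι} (hij : i ≠ j) (x : ZMod n) :
    SLRel (Pi.single i x) (Pi.single i ((n.gcd x.val : ℕ) : ZMod n)) := by
  set g := n.gcd x.val
  have hg : (g : ZMod n) = (Nat.gcdB n x.val : ZMod n) * x := by
    have := congrArg (Int.cast : ℤ → ZMod n) (Nat.gcd_eq_gcd_ab n x.val)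
    push_cast at this
    rw [ZMod.natCast_self, zero_mul, zero_add, ZMod.natCast_zmod_val] at this
    rwa [mul_comm]
  have hx : x = ((x.val / g : ℕ) : ZMod n) * g := by
    rw [← Nat.cast_mul, Nat.div_mul_cancel (Nat.gcd_dvd_right _ _), ZMod.natCast_zmod_val]
  -- on the coordinates `(i, j)`: `(x, 0) ↦ (x, g) ↦ (0, g) ↦ (g, 0)`
  have h₁ : SLRel (Pi.single i x) (Function.update (Pi.single i x) j g) := by
    simpa [hij.symm, ← hg] using
      SLRel.update_add_mul hij (Nat.gcdB n x.val : ZMod n) (Pi.single i x)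
  have h₂ : SLRel (Function.update (Pi.single i x) j g) (Pi.single j g) := by
    convert SLRel.update_add_mul hij.symm (-((x.val / g : ℕ) : ZMod n)) _ using 1
    funext k
    rcases eq_or_ne k i with rfl | hki
    · simp [hij, ← hx]
    · simp [Function.update_apply, Pi.single_apply, hki]
  have h₃ : SLRel (Pi.single j (g : ZMod n)) (Pi.single i g) := by
    convert SLRel.swap_of_eq_zero hij (a := Pi.single j (g : ZMod n))
      (Pi.single_eq_of_ne hij _) using 1
    funext k
    rcases eq_or_ne k j with rfl | hkj
    · simp [hij.symm]
    · simp [Function.update_apply, Pi.single_apply, hkj]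
  exact h₁.trans (h₂.trans h₃)

theorem slRel_single_gcdWith [NeZero n] [Nontrivial ι] (i : ι) (a : ι → ZMod n) :
    SLRel a (Pi.single i (gcdWith n a : ZMod n)) := by
  obtain ⟨x, hx⟩ := exists_slRel_single i a
  obtain ⟨j, hj⟩ := exists_ne i
  rw [hx.gcdWith_eq, gcdWith_single]
  exact hx.trans (slRel_single_natCast_gcd hj.symm x)

theorem slRel_iff_gcdWith_eq [NeZero n] [Nontrivial ι] (a b : ι → ZMod n) :
    SLRel a b ↔ gcdWith n a = gcdWith n b := by
  refine ⟨SLRel.gcdWith_eq, fun h => ?_⟩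
  obtain ⟨i⟩ := ‹Nontrivial ι›.to_nonempty
  exact (slRel_single_gcdWith i a).trans (h ▸ (slRel_single_gcdWith i b).symm)

end SLOrbit

/-- For m ≥ 2, n ≥ 2, the SL(m, Z_n)-orbits on (Z_n)^m are exactly the sets
O_d = {a : gcd(a, n) = d} for divisors d of n: two vectors lie in the same
orbit iff they have the same gcd with n, and gcd(a, n) always divides n. -/
theorem orbits_eq_gcd_classes (m n : ℕ) (hn : 2 ≤ n) (hm : 2 ≤ m) :
    (∀ a b : Fin m → ZMod n,
      (∃ A : Matrix.SpecialLinearGroup (Fin m) (ZMod n),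
          vecMul a (A : Matrix (Fin m) (Fin m) (ZMod n)) = b) ↔
        Nat.gcd n (Finset.univ.gcd fun i => (a i).val)
          = Nat.gcd n (Finset.univ.gcd fun i => (b i).val)) ∧
    (∀ a : Fin m → ZMod n,
      Nat.gcd n (Finset.univ.gcd fun i => (a i).val) ∣ n) := by
  have : NeZero n := ⟨by omega⟩
  have : Nontrivial (Fin m) := Fin.nontrivial_iff_two_le.mpr hm
  exact ⟨SLOrbit.slRel_iff_gcdWith_eq, fun a => Nat.gcd_dvd_left _ _⟩
end
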